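/- arXiv:math/0611174 — 2 statements merged into one kernel-verified Lean document; each statement's English description precedes it below -/
import Mathlib

section
/- The weight v(x) = exp(|x| / log(e+|x|)) on ℝ satisfies the GRS-condition but not the Beurling-Domar condition: for each x ≠ 0, lim_{n→∞} v(nx)^{1/n} = 1, yet ∑_{n≥1} log v(nx)/n² = ∑_{n≥1} |x| / (n·log(e+n|x|)) = ∞. -/
open Filter Real

private lemma aux_atTop (a : ℝ) (ha : 0 < a) :
    Tendsto (fun n : ℕ => Real.log (Real.exp 1 + (n : ℝ) * a)) atTop atTop := by
  apply Real.tendsto_log_atTop.comp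
  apply tendsto_atTop_add_const_left
  exact (tendsto_natCast_atTop_atTop (R := ℝ)).atTop_mul_const ha

/-- The weight `exp (|x| / log (e + |x|))` on ℝ satisfies the GRS-condition but
violates the Beurling-Domar condition. -/
theorem stmt14 :
    (∀ x : ℝ, Filter.Tendsto
        (fun n : ℕ =>
          Real.exp (|(n : ℝ) * x| / Real.log (Real.exp 1 + |(n : ℝ) * x|)) ^ ((n : ℝ)⁻¹))
        Filter.atTop (nhds 1)) ∧
      (∀ x : ℝ, x ≠ 0 → ¬ Summable fun n : ℕ =>
          Real.log (Real.exp (|(n : ℝ) * x| / Real.log (Real.exp 1 + |(n : ℝ) * x|)))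
            / (n : ℝ) ^ 2) := by
  constructor
  · intro x
    have habs : ∀ n : ℕ, |(n : ℝ) * x| = (n : ℝ) * |x| := by
      intro n
      rw [abs_mul, Nat.abs_cast]
    rcases eq_or_ne x 0 with rfl | hx
    · simp only [mul_zero, abs_zero, zero_div, Real.exp_zero, Real.one_rpow]
      exact tendsto_const_nhds
    · have ha : 0 < |x| := abs_pos.mpr hx
      have hL : ∀ n : ℕ, (1 : ℝ) ≤ Real.log (Real.exp 1 + (n : ℝ) * |x|) := by
        intro n
        have h1 : Real.exp 1 ≤ Real.exp 1 + (n : ℝ) * |x| :=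
          le_add_of_nonneg_right (by positivity)
        calc (1 : ℝ) = Real.log (Real.exp 1) := (Real.log_exp 1).symm
          _ ≤ _ := Real.log_le_log (Real.exp_pos 1) h1
      have key : Tendsto (fun n : ℕ =>
          |(n : ℝ) * x| / Real.log (Real.exp 1 + |(n : ℝ) * x|) * (n : ℝ)⁻¹)
          atTop (nhds 0) := by
        have heq : ∀ᶠ n : ℕ in atTop,
            |(n : ℝ) * x| / Real.log (Real.exp 1 + |(n : ℝ) * x|) * (n : ℝ)⁻¹
              = |x| / Real.log (Real.exp 1 + (n : ℝ) * |x|) := by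
          filter_upwards [eventually_ge_atTop 1] with n hn
          have hn' : (n : ℝ) ≠ 0 := by positivity
          have hLn : Real.log (Real.exp 1 + (n : ℝ) * |x|) ≠ 0 := by
            linarith [hL n]
          rw [habs n]
          field_simp
        rw [tendsto_congr' heq]
        exact Tendsto.const_div_atTop (aux_atTop |x| ha) _
      have := (Real.continuous_exp.tendsto 0).comp key
      rw [Real.exp_zero] at this
      refine this.congr fun n => ?_
      simp only [Function.comp]
      rw [Real.rpow_def_of_pos (Real.exp_pos _), Real.log_exp]
  · intro x hx hsum
    set a := |x| with haa
    have ha : 0 < a := abs_pos.mpr hx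
    have habs : ∀ n : ℕ, |(n : ℝ) * x| = (n : ℝ) * a := by
      intro n; rw [abs_mul, Nat.abs_cast]
    set f : ℕ → ℝ := fun n : ℕ =>
      Real.log (Real.exp (|(n : ℝ) * x| / Real.log (Real.exp 1 + |(n : ℝ) * x|)))
        / (n : ℝ) ^ 2 with hf
    have hL : ∀ n : ℕ, (1 : ℝ) ≤ Real.log (Real.exp 1 + (n : ℝ) * a) := by
      intro n
      have h1 : Real.exp 1 ≤ Real.exp 1 + (n : ℝ) * a :=
        le_add_of_nonneg_right (by positivity)
      calc (1 : ℝ) = Real.log (Real.exp 1) := (Real.log_exp 1).symm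
        _ ≤ _ := Real.log_le_log (Real.exp_pos 1) h1
    have hfval : ∀ n : ℕ, 0 < n →
        f n = a / ((n : ℝ) * Real.log (Real.exp 1 + (n : ℝ) * a)) := by
      intro n hn
      have hn' : (n : ℝ) ≠ 0 := by positivity
      have hLn : Real.log (Real.exp 1 + (n : ℝ) * a) ≠ 0 := by linarith [hL n]
      simp only [hf, habs n, Real.log_exp]
      field_simp
    have h_nonneg : ∀ n : ℕ, 0 ≤ f n := by
      intro n
      rcases Nat.eq_zero_or_pos n with rfl | hn
      · simp [hf]
      · rw [hfval n hn]
        have := hL n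
        positivity
    have h_anti : ∀ ⦃m n : ℕ⦄, 0 < m → m ≤ n → f n ≤ f m := by
      intro m n hm hmn
      have hn : 0 < n := lt_of_lt_of_le hm hmn
      rw [hfval m hm, hfval n hn]
      have hmR : (0:ℝ) < m := by exact_mod_cast hm
      have hden : (0:ℝ) < (m : ℝ) * Real.log (Real.exp 1 + (m : ℝ) * a) := by
        have := hL m; nlinarith
      apply div_le_div_of_nonneg_left ha.le hden
      · apply mul_le_mul (by exact_mod_cast hmn)
        · apply Real.log_le_log (by positivity)
          have : (m : ℝ) ≤ n := by exact_mod_cast hmn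
          nlinarith
        · linarith [hL m]
        · positivity
      
    have hcond : Summable (fun n : ℕ => (2:ℝ) ^ n * f (2 ^ n)) :=
      (summable_condensed_iff_of_nonneg h_nonneg h_anti).mpr hsum
    set B : ℝ := 1 + Real.log 2 + Real.log (1 + a) with hB
    have hlog2 : (0:ℝ) < Real.log 2 := Real.log_pos one_lt_two
    have hlog1a : (0:ℝ) ≤ Real.log (1 + a) := Real.log_nonneg (by linarith)
    have hBpos : 0 < B := by rw [hB]; linarith
    -- bound : log (e + 2^n a) ≤ B * (n+1)
    have hbound : ∀ n : ℕ,
        Real.log (Real.exp 1 + (2 ^ n : ℝ) * a) ≤ B * (n + 1) := by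
      intro n
      have h2n : (1:ℝ) ≤ (2:ℝ) ^ n := one_le_pow₀ one_le_two
      have step1 : Real.exp 1 + (2 ^ n : ℝ) * a ≤
          Real.exp 1 * (1 + (2 ^ n : ℝ) * a) := by
        have h1e : (1:ℝ) ≤ Real.exp 1 := by
          have := Real.add_one_le_exp (1:ℝ); linarith
        nlinarith [mul_nonneg (pow_nonneg (by norm_num : (0:ℝ) ≤ 2) n) ha.le]
      have step2 : (1:ℝ) + (2 ^ n : ℝ) * a ≤ (2 ^ n : ℝ) * (1 + a) := by nlinarith
      calc Real.log (Real.exp 1 + (2 ^ n : ℝ) * a)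
          ≤ Real.log (Real.exp 1 * (1 + (2 ^ n : ℝ) * a)) :=
            Real.log_le_log (by positivity) step1
        _ = 1 + Real.log (1 + (2 ^ n : ℝ) * a) := by
            rw [Real.log_mul (Real.exp_ne_zero 1) (by positivity), Real.log_exp]
        _ ≤ 1 + Real.log ((2 ^ n : ℝ) * (1 + a)) := by
            have := Real.log_le_log (by positivity) step2; linarith
        _ = 1 + (n * Real.log 2 + Real.log (1 + a)) := by
            rw [Real.log_mul (by positivity) (by positivity), Real.log_pow]
        _ ≤ B * (n + 1) := by
            rw [hB]
            have hn0 : (0:ℝ) ≤ (n:ℝ) := Nat.cast_nonneg n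
            nlinarith
    -- hence a / (B * (n+1)) ≤ 2^n • f (2^n)
    have hcmp : ∀ n : ℕ, a / B * ((n:ℝ) + 1)⁻¹ ≤ (2:ℝ) ^ n * f (2 ^ n) := by
      intro n
      have h2pos : 0 < (2:ℕ) ^ n := pow_pos (by norm_num) n
      have hc : ((2 ^ n : ℕ) : ℝ) = (2:ℝ) ^ n := by push_cast; ring
      rw [hfval _ h2pos, hc]
      have hLpos : (0:ℝ) < Real.log (Real.exp 1 + (2:ℝ) ^ n * a) := by
        have := hL (2 ^ n); rw [hc] at this; linarith
      have h2ne : ((2:ℝ) ^ n) ≠ 0 := by positivity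
      have hrhs : (2:ℝ) ^ n * (a / ((2:ℝ) ^ n * Real.log (Real.exp 1 + (2:ℝ) ^ n * a)))
          = a / Real.log (Real.exp 1 + (2:ℝ) ^ n * a) := by
        field_simp
      rw [hrhs]
      have hlhs : a / B * ((n:ℝ) + 1)⁻¹ = a / (B * ((n:ℝ) + 1)) := by
        have hB0 : B ≠ 0 := ne_of_gt hBpos
        have hn1 : ((n:ℝ) + 1) ≠ 0 := by positivity
        field_simp
      rw [hlhs]
      exact div_le_div_of_nonneg_left ha.le hLpos (by
        have := hbound n
        have hn0 : (0:ℝ) ≤ (n:ℝ) := Nat.cast_nonneg n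
        nlinarith)
    have hsum2 : Summable (fun n : ℕ => a / B * ((n:ℝ) + 1)⁻¹) := by
      refine Summable.of_nonneg_of_le (fun n => ?_) hcmp hcond
      positivity
    have hsum3 : Summable (fun n : ℕ => ((n:ℝ) + 1)⁻¹) := by
      have hc : a / B ≠ 0 := by positivity
      have := hsum2.mul_left (a / B)⁻¹
      refine this.congr fun n => ?_
      field_simp
    have hsum4 : Summable (fun n : ℕ => ((n:ℝ))⁻¹) := by
      rw [← summable_nat_add_iff 1]
      refine hsum3.congr fun n => ?_
      push_cast
      ring
    exact Real.not_summable_natCast_inv hsum4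
end

section
/- Let v : ℤ^d → [1,∞) be submultiplicative and suppose v violates the GRS-condition at some k ∈ ℤ^d, so that α := lim_{n→∞} log v(nk)/n > 0. Then for any 0 < δ < α/2, the function f(t) = 1 - e^{-δ}·e^{2πi k·t} on the torus 𝕋^d is bounded away from zero (|f(t)| ≥ 1 - e^{-δ} > 0 for all t), f has Fourier coefficients in ℓ¹_v, but its pointwise inverse 1/f(t) = ∑_{n=0}^∞ e^{-nδ} e^{2πi nk·t} has Fourier coefficients (e^{-nδ})_{n≥0} supported on {nk : n ≥ 0} that do NOT lie in ℓ¹_v, since ∑_{n=0}^∞ e^{-nδ}·v(nk) = ∞. -/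
/-- If a submultiplicative weight `v` on ℤ^d violates the GRS-condition at `k`
(with `lim log v (n k) / n = α > 0`), then for `0 < δ < α/2` the function
`f t = 1 - e^{-δ} e^{2πi k·t}` is bounded below by `1 - e^{-δ} > 0`, has
Fourier coefficients in `ℓ¹_v`, but `1/f = ∑ e^{-nδ} e^{2πi nk·t}` has Fourier
coefficients not in `ℓ¹_v`. -/
theorem stmt17 {d : ℕ} (v : (Fin d → ℤ) → ℝ) (hv1 : ∀ k, 1 ≤ v k)
    (hsub : ∀ x y, v (x + y) ≤ v x * v y) (k : Fin d → ℤ)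
    (α : ℝ) (hα : 0 < α)
    (hlim : Filter.Tendsto (fun n : ℕ => Real.log (v (n • k)) / (n : ℝ))
      Filter.atTop (nhds α))
    (δ : ℝ) (hδ0 : 0 < δ) (hδ : δ < α / 2) :
    (0 < 1 - Real.exp (-δ)) ∧
      (∀ t : Fin d → ℝ,
        1 - Real.exp (-δ) ≤
          ‖(1 : ℂ) - (Real.exp (-δ) : ℂ) *
              Complex.exp (2 * (Real.pi : ℂ) * Complex.I *
                ((∑ i, (k i : ℝ) * t i : ℝ) : ℂ))‖) ∧
      Summable (fun m : Fin d → ℤ =>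
        ‖(if m = 0 then (1 : ℂ) else if m = k then (-(Real.exp (-δ)) : ℂ) else 0)‖ * v m) ∧
      (∀ t : Fin d → ℝ,
        ((1 : ℂ) - (Real.exp (-δ) : ℂ) *
            Complex.exp (2 * (Real.pi : ℂ) * Complex.I *
              ((∑ i, (k i : ℝ) * t i : ℝ) : ℂ)))⁻¹ =
          ∑' n : ℕ, (Real.exp (-(n : ℝ) * δ) : ℂ) *
            Complex.exp (2 * (Real.pi : ℂ) * Complex.I * (n : ℂ) *
              ((∑ i, (k i : ℝ) * t i : ℝ) : ℂ))) ∧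
      ¬ Summable (fun n : ℕ => Real.exp (-(n : ℝ) * δ) * v (n • k)) := by
  have he : Real.exp (-δ) < 1 := by
    rw [Real.exp_lt_one_iff]; linarith
  have hnormexp : ∀ x : ℝ, ‖Complex.exp (2 * (Real.pi : ℂ) * Complex.I * (x : ℂ))‖ = 1 := by
    intro x
    have : 2 * (Real.pi : ℂ) * Complex.I * (x : ℂ) = ((2 * Real.pi * x : ℝ) : ℂ) * Complex.I := by
      push_cast; ring
    rw [this, Complex.norm_exp_ofReal_mul_I]
  refine ⟨by linarith, ?_, ?_, ?_, ?_⟩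
  · intro t
    set z : ℂ := (Real.exp (-δ) : ℂ) * Complex.exp (2 * (Real.pi : ℂ) * Complex.I *
        ((∑ i, (k i : ℝ) * t i : ℝ) : ℂ)) with hzdef
    have hz : ‖z‖ = Real.exp (-δ) := by
      rw [hzdef, norm_mul, hnormexp, mul_one, Complex.norm_real,
        Real.norm_eq_abs, abs_of_pos (Real.exp_pos _)]
    have h1 := norm_sub_norm_le (1 : ℂ) z
    rw [norm_one, hz] at h1
    exact h1
  · apply summable_of_ne_finset_zero (s := {0, k})
    intro m hm
    simp only [Finset.mem_insert, Finset.mem_singleton, not_or] at hm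
    rw [if_neg hm.1, if_neg hm.2, norm_zero, zero_mul]
  · intro t
    set θ : ℝ := ∑ i, (k i : ℝ) * t i with hθ
    set w : ℂ := (Real.exp (-δ) : ℂ) * Complex.exp (2 * (Real.pi : ℂ) * Complex.I * (θ : ℂ)) with hw
    have hwn : ‖w‖ < 1 := by
      rw [hw, norm_mul, hnormexp, mul_one, Complex.norm_real,
        Real.norm_eq_abs, abs_of_pos (Real.exp_pos _)]
      exact he
    rw [← tsum_geometric_of_norm_lt_one hwn]
    apply tsum_congr
    intro n
    rw [hw, mul_pow, ← Complex.ofReal_pow, ← Real.exp_nat_mul, ← Complex.exp_nat_mul]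
    congr 2
    · push_cast; ring
    · push_cast; ring
  · intro hs
    have h0 := hs.tendsto_atTop_zero
    have h2 : ∀ᶠ n : ℕ in Filter.atTop, δ < Real.log (v (n • k)) / n :=
      hlim.eventually (eventually_gt_nhds (by linarith))
    have hev : ∀ᶠ n : ℕ in Filter.atTop,
        1 ≤ Real.exp (-(n : ℝ) * δ) * v (n • k) := by
      filter_upwards [h2, Filter.eventually_gt_atTop 0] with n hn hn0
      have hnp : (0 : ℝ) < n := by exact_mod_cast hn0
      have hvp : (0 : ℝ) < v (n • k) := lt_of_lt_of_le one_pos (hv1 _)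
      have hlog : (n : ℝ) * δ ≤ Real.log (v (n • k)) := by
        have := (lt_div_iff₀ hnp).mp hn
        linarith
      have hvb : Real.exp ((n : ℝ) * δ) ≤ v (n • k) := by
        calc Real.exp ((n : ℝ) * δ) ≤ Real.exp (Real.log (v (n • k))) :=
              Real.exp_le_exp.mpr hlog
          _ = v (n • k) := Real.exp_log hvp
      have hprod : Real.exp (-(n : ℝ) * δ) * Real.exp ((n : ℝ) * δ) = 1 := by
        rw [← Real.exp_add]; ring_nf; exact Real.exp_zero
      nlinarith [Real.exp_pos (-(n : ℝ) * δ)]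
    have hlt := h0.eventually_lt_const (one_pos)
    obtain ⟨n, hn1, hn2⟩ := (hev.and hlt).exists
    linarith
end
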